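/- Let n ≥ 2, let z be a unit vector in V_{n,m} and y a unit vector in V_{n,l} with m > l. Suppose there exist integers α, β ≥ 1 with d := αm = βl, an integer 1 ≤ a ≤ d−1, and unit vectors z₁ ∈ V_{n,a}, z₂ ∈ V_{n,d−a} such that z^{⊗α} = z₁ ⊗ z₂ and y^{⊗β} = z₂ ⊗ z₁. Then z is periodic. -/

import Mathlib

noncomputable section

/-- `Vnm n m` is the Hilbert space `ℓ²({1,…,n}^m)`, identified with `(ℂ^n)^{⊗m}`. -/
abbrev Vnm (n m : ℕ) : Type := EuclideanSpace ℂ (Fin m → Fin n)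

/-- The tensor product `x ⊗ y`, via `(x ⊗ y)_{JK} = x_J y_K`. -/
def tensV {n m l : ℕ} (x : Vnm n m) (y : Vnm n l) : Vnm n (m + l) :=
  WithLp.toLp 2 (fun J => x (fun i => J (Fin.castAdd l i)) * y (fun i => J (Fin.natAdd m i)))

/-- Re-indexing of a tensor along an equality of lengths. -/
def castV {n m m' : ℕ} (h : m = m') (z : Vnm n m) : Vnm n m' :=
  WithLp.toLp 2 (fun J => z (fun i => J (Fin.cast h i)))

/-- The tensor power `x^{⊗p}`. -/
def tpowV {n m : ℕ} (x : Vnm n m) (p : ℕ) : Vnm n (p * m) :=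
  WithLp.toLp 2 (fun J => ∏ i : Fin p, x (fun t => J ⟨(i : ℕ) * m + (t : ℕ), by
    have h2 : (t : ℕ) < m := t.isLt
    have h1 : (i : ℕ) + 1 ≤ p := i.isLt
    have h3 : ((i : ℕ) + 1) * m = (i : ℕ) * m + m := by ring
    have h4 : ((i : ℕ) + 1) * m ≤ p * m := Nat.mul_le_mul_right m h1
    omega⟩))

/-- The coordinatewise complex conjugate. -/
def conjV {n m : ℕ} (z : Vnm n m) : Vnm n m := WithLp.toLp 2 (fun J => starRingEnd ℂ (z J))

/-- A unit vector `z` is periodic if `z = x^{⊗p}` for some unit vector `x` and `p ≥ 2`;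
it is nonperiodic if it is not periodic. -/
def PeriodicV {n m : ℕ} (z : Vnm n m) : Prop :=
  ∃ (m' p : ℕ) (x : Vnm n m') (h : p * m' = m),
    ‖x‖ = 1 ∧ 2 ≤ p ∧ castV h (tpowV x p) = z

/-- The matricization of `z ∈ V_{n,b+a}` as an operator `V_{n,a} → V_{n,b}`,
`(T z) e_K = Σ_{|J|=b} z_{JK} e_J`. -/
def matT {n b a : ℕ} (z : Vnm n (b + a)) :
    EuclideanSpace ℂ (Fin a → Fin n) →L[ℂ] EuclideanSpace ℂ (Fin b → Fin n) :=
  LinearMap.toContinuousLinearMap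
    (Matrix.toEuclideanLin
      (Matrix.of fun (J : Fin b → Fin n) (K : Fin a → Fin n) => z (Fin.append J K)))

/-- The matricization `T_a(z) : V_{n,a} → V_{n,m-a}` of `z ∈ V_{n,m}`,
`T_a(z) e_K = Σ_{|J|=m−a} z_{JK} e_J`. -/
def Tmat {n m : ℕ} (a : ℕ) (h : a ≤ m) (z : Vnm n m) :
    EuclideanSpace ℂ (Fin a → Fin n) →L[ℂ] EuclideanSpace ℂ (Fin (m - a) → Fin n) :=
  matT (castV (by omega : m = (m - a) + a) z)

/-- `z` is indecomposable if it is not a tensor product of lower-degree tensors. -/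
def IndecomposableV {n m : ℕ} (z : Vnm n m) : Prop :=
  1 ≤ m ∧ ¬ ∃ (a b : ℕ) (h : a + b = m) (x : Vnm n a) (y : Vnm n b),
    1 ≤ a ∧ 1 ≤ b ∧ castV h (tensV x y) = z

/-- The iterated tensor product `x₁ ⊗ ⋯ ⊗ x_l` of homogeneous tensors of degrees `ms i`. -/
def bigTensV {n l : ℕ} (ms : Fin l → ℕ) (xs : ∀ i, Vnm n (ms i)) : Vnm n (∑ i, ms i) :=
  WithLp.toLp 2 (fun J => ∏ i : Fin l, xs i (fun t => J ⟨(∑ j ∈ Finset.Iio i, ms j) + (t : ℕ), by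
    have h1 : (∑ j ∈ Finset.Iio i, ms j) + ms i ≤ ∑ j, ms j := by
      calc (∑ j ∈ Finset.Iio i, ms j) + ms i
          = ∑ j ∈ insert i (Finset.Iio i), ms j := by
            rw [Finset.sum_insert (by simp)]; ring
        _ ≤ ∑ j, ms j := Finset.sum_le_sum_of_subset (Finset.subset_univ _)
    have h2 : (t : ℕ) < ms i := t.isLt
    omega⟩))

/-- `z ⊠ y ∈ V_{nn',m}`: `(z ⊠ y)_L = z_J y_K` where `L = J ⊠ K` is given by the
pairing `l_t = n'·j_t + k_t` of `{0,…,n−1}×{0,…,n'−1}` with `{0,…,nn'−1}`. -/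
def boxTensV {n n' m : ℕ} (z : Vnm n m) (y : Vnm n' m) : Vnm (n * n') m :=
  WithLp.toLp 2 (fun L =>
    z (fun t => ⟨(L t : ℕ) / n', by
        have h := (L t).isLt
        have hn' : 0 < n' := Nat.pos_of_ne_zero (by rintro rfl; simp at h)
        exact (Nat.div_lt_iff_lt_mul hn').mpr h⟩) *
    y (fun t => ⟨(L t : ℕ) % n', by
        have h := (L t).isLt
        have hn' : 0 < n' := Nat.pos_of_ne_zero (by rintro rfl; simp at h)
        exact Nat.mod_lt _ hn'⟩))

/-- `z * y := z^{⊗α} ⊠ y^{⊗β} ∈ V_{nn',d}` where `d = αm = βl` is the lcm of `m` and `l`. -/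
def starV {n n' m l : ℕ} (z : Vnm n m) (y : Vnm n' l) : Vnm (n * n') (Nat.lcm m l) :=
  boxTensV (castV (Nat.div_mul_cancel (Nat.dvd_lcm_left m l)) (tpowV z (Nat.lcm m l / m)))
    (castV (Nat.div_mul_cancel (Nat.dvd_lcm_right m l)) (tpowV y (Nat.lcm m l / l)))

/-- Conjugacy of homogeneous tensors: `z = y`, or `z = x₁ ⊗ x₂` and `y = x₂ ⊗ x₁`
for some unit vectors `x₁, x₂`. -/
def ConjVec {n m l : ℕ} (z : Vnm n m) (y : Vnm n l) : Prop :=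
  (∃ h : m = l, castV h z = y) ∨
    ∃ (a b : ℕ) (x₁ : Vnm n a) (x₂ : Vnm n b) (h₁ : a + b = m) (h₂ : b + a = l),
      ‖x₁‖ = 1 ∧ ‖x₂‖ = 1 ∧ castV h₁ (tensV x₁ x₂) = z ∧ castV h₂ (tensV x₂ x₁) = y

/-- A Cuntz family of order `n` on `H`: `Sᵢ* Sⱼ = δᵢⱼ 1` and `Σᵢ Sᵢ Sᵢ* = 1`. -/
def IsCuntzFamily {H : Type*} [NormedAddCommGroup H] [InnerProductSpace ℂ H]
    [CompleteSpace H] {n : ℕ} (S : Fin n → H →L[ℂ] H) : Prop :=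
  (∀ i j, (ContinuousLinearMap.adjoint (S i)).comp (S j) = if i = j then 1 else 0) ∧
    ∑ i, (S i).comp (ContinuousLinearMap.adjoint (S i)) = 1

/-- `S_J := S_{j₁} ∘ ⋯ ∘ S_{j_k}` for a word `J = (j₁,…,j_k)`, with `S_∅ = 1`. -/
def Sword {H : Type*} [NormedAddCommGroup H] [InnerProductSpace ℂ H]
    {ι : Type*} (S : ι → H →L[ℂ] H) : (k : ℕ) → (Fin k → ι) → (H →L[ℂ] H)
  | 0, _ => 1
  | (k + 1), J => (S (J 0)).comp (Sword S k (fun i => J i.succ))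

/-- `s(z) := Σ_{|J|=m} z_J S_J`. -/
def sop {H : Type*} [NormedAddCommGroup H] [InnerProductSpace ℂ H]
    {n m : ℕ} (S : Fin n → H →L[ℂ] H) (z : Vnm n m) : H →L[ℂ] H :=
  ∑ J : Fin m → Fin n, z J • Sword S m J

/-!
Tensors are handled through their coefficients along infinite words: `coef z t J` is the
coordinate of `z ∈ V_{n,m}` at the multi-index `(J t, …, J (t + m - 1))`. Tensor products and
tensor powers become products of such coefficients, and no casts between degrees are needed.

Nonzero tensors obey Levi's lemma for words: if `P ⊗ Q = R ⊗ S` with `deg R ≤ deg P`, then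
`P = R ⊗ w` and `S = w ⊗ Q`. Cutting `z^{⊗α} = z₁ ⊗ z₂` inside a copy of `z` gives `z = A ⊗ B`
with `z₂ ⊗ z₁ = (B ⊗ A)^{⊗α}`, hence `(B ⊗ A)^{⊗α} = y^{⊗β}`. As for words, tensors commuting up
to a scalar are multiples of powers of a single tensor, and hence so are two tensors with a common
power. The degree of that tensor `x` divides `l < m`, so `B ⊗ A = c x^{⊗i}` with `i ≥ 2`; rotating
back, `z = A ⊗ B = c x'^{⊗i} = (ρ x')^{⊗i}` with `ρ^i = c`.
-/

namespace Vnm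

variable {n : ℕ}

def coef {m : ℕ} (z : Vnm n m) (t : ℕ) (J : ℕ → Fin n) : ℂ :=
  z (fun i => J (t + i))

def powCoef {g : ℕ} (x : Vnm n g) (k t : ℕ) (J : ℕ → Fin n) : ℂ :=
  ∏ i ∈ Finset.range k, coef x (t + i * g) J

def shift (t : ℕ) (J : ℕ → Fin n) : ℕ → Fin n := fun i => J (t + i)

def splice (r : ℕ) (K J : ℕ → Fin n) : ℕ → Fin n := fun i => if i < r then K i else J (i - r)

def extendWord [NeZero n] {N : ℕ} (K : Fin N → Fin n) : ℕ → Fin n :=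
  fun i => if h : i < N then K ⟨i, h⟩ else 0

def ofWordFun [NeZero n] (s : ℕ) (F : (ℕ → Fin n) → ℂ) : Vnm n s :=
  WithLp.toLp 2 (fun K => F (extendWord K))

section coef

variable {m g : ℕ}

theorem ne_zero_of_coef_ne_zero {u : Vnm n m} {t : ℕ} {J : ℕ → Fin n} (h : coef u t J ≠ 0) :
    u ≠ 0 := by
  rintro rfl
  exact h rfl

theorem coef_congr (z : Vnm n m) {t : ℕ} {J J' : ℕ → Fin n}
    (h : ∀ i < m, J (t + i) = J' (t + i)) : coef z t J = coef z t J' :=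
  congrArg z (funext fun i => h i i.isLt)

theorem coef_shift (z : Vnm n m) (s t : ℕ) (J : ℕ → Fin n) :
    coef z s (shift t J) = coef z (t + s) J :=
  congrArg z (funext fun i => congrArg J (add_assoc t s i).symm)

theorem coef_zero_shift (z : Vnm n m) (t : ℕ) (J : ℕ → Fin n) :
    coef z 0 (shift t J) = coef z t J := by
  rw [coef_shift, add_zero]

theorem coef_smul (c : ℂ) (z : Vnm n m) (t : ℕ) (J : ℕ → Fin n) :
    coef (c • z) t J = c * coef z t J := rfl

theorem coef_castV {m' : ℕ} (h : m = m') (z : Vnm n m) (t : ℕ) (J : ℕ → Fin n) :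
    coef (castV h z) t J = coef z t J := by
  subst h; rfl

theorem coef_tensV {l : ℕ} (x : Vnm n m) (y : Vnm n l) (t : ℕ) (J : ℕ → Fin n) :
    coef (tensV x y) t J = coef x t J * coef y (t + m) J := by
  simp only [coef, tensV, Fin.val_castAdd, Fin.val_natAdd, add_assoc]

theorem coef_tpowV (x : Vnm n g) (k t : ℕ) (J : ℕ → Fin n) :
    coef (tpowV x k) t J = powCoef x k t J := by
  simp only [coef, tpowV, powCoef, add_assoc]
  exact Fin.prod_univ_eq_prod_range (fun i => x fun s => J (t + (i * g + s))) k

theorem coef_eq_coef_of_eq_zero (hm : m = 0) (z : Vnm n m) (t t' : ℕ) (J J' : ℕ → Fin n) :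
    coef z t J = coef z t' J' :=
  congrArg z (funext fun i => absurd i.isLt (by omega))

theorem coef_splice_of_add_le (z : Vnm n m) {t r : ℕ} (h : t + m ≤ r) (K J : ℕ → Fin n) :
    coef z t (splice r K J) = coef z t K :=
  coef_congr z fun i hi => if_pos (by omega)

theorem coef_splice_of_le (z : Vnm n m) {t r : ℕ} (h : r ≤ t) (K J : ℕ → Fin n) :
    coef z t (splice r K J) = coef z (t - r) J :=
  congrArg z <| funext fun i => by
    simp only [splice, if_neg (show ¬ t + i < r by omega)]
    congr 1
    omega

theorem shift_splice {t r : ℕ} (h : t ≤ r) (K J : ℕ → Fin n) :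
    shift t (splice r K J) = splice (r - t) (shift t K) J := by
  funext i
  simp only [shift, splice]
  split_ifs <;> first | rfl | omega | (congr 1; omega)

theorem powCoef_zero (x : Vnm n g) (t : ℕ) (J : ℕ → Fin n) : powCoef x 0 t J = 1 :=
  Finset.prod_range_zero _

theorem powCoef_one (x : Vnm n g) (t : ℕ) (J : ℕ → Fin n) : powCoef x 1 t J = coef x t J := by
  simp [powCoef]

theorem powCoef_add (x : Vnm n g) (k₁ k₂ t : ℕ) (J : ℕ → Fin n) :
    powCoef x (k₁ + k₂) t J = powCoef x k₁ t J * powCoef x k₂ (t + k₁ * g) J := by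
  simp only [powCoef, Finset.prod_range_add, add_mul, add_assoc]

theorem powCoef_succ (x : Vnm n g) (k t : ℕ) (J : ℕ → Fin n) :
    powCoef x (k + 1) t J = coef x t J * powCoef x k (t + g) J := by
  rw [add_comm k, powCoef_add, powCoef_one, one_mul]

theorem powCoef_succ' (x : Vnm n g) (k t : ℕ) (J : ℕ → Fin n) :
    powCoef x (k + 1) t J = powCoef x k t J * coef x (t + k * g) J :=
  Finset.prod_range_succ _ k

theorem powCoef_shift (x : Vnm n g) (k s t : ℕ) (J : ℕ → Fin n) :
    powCoef x k s (shift t J) = powCoef x k (t + s) J := by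
  simp only [powCoef, coef_shift, add_assoc]

theorem powCoef_smul (c : ℂ) (x : Vnm n g) (k t : ℕ) (J : ℕ → Fin n) :
    powCoef (c • x) k t J = c ^ k * powCoef x k t J := by
  simp only [powCoef, coef_smul, Finset.prod_mul_distrib, Finset.prod_const, Finset.card_range]

theorem coef_eq_mul_of_forall {r s : ℕ} {P : Vnm n m} {R : Vnm n r} {w : Vnm n s}
    (h : ∀ J, coef P 0 J = coef R 0 J * coef w r J) (t : ℕ) (J : ℕ → Fin n) :
    coef P t J = coef R t J * coef w (t + r) J := by
  simpa only [coef_shift, add_zero] using h (shift t J)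

theorem coef_eq_smul_powCoef_of_forall {P : Vnm n m} {x : Vnm n g} {c : ℂ} {k : ℕ}
    (h : ∀ J, coef P 0 J = c * powCoef x k 0 J) (t : ℕ) (J : ℕ → Fin n) :
    coef P t J = c * powCoef x k t J := by
  simpa only [coef_shift, powCoef_shift, add_zero] using h (shift t J)

theorem powCoef_tensV_succ_of_split {r s : ℕ} {A : Vnm n r} {B : Vnm n s} {x : Vnm n g}
    (hg : r + s = g) (hx : ∀ t J, coef x t J = coef A t J * coef B (t + r) J) (k t : ℕ)
    (J : ℕ → Fin n) :
    powCoef (tensV B A) (k + 1) t J =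
      coef B t J * powCoef x k (t + s) J * coef A (t + s + k * g) J := by
  subst hg
  induction k generalizing t with
  | zero => rw [powCoef_one, powCoef_zero, coef_tensV, zero_mul, add_zero, mul_one]
  | succ k ih =>
    rw [powCoef_succ _ (k + 1), ih, powCoef_succ, hx, coef_tensV,
      show t + s + r = t + (s + r) by ring, show t + s + (r + s) = t + (s + r) + s by ring,
      show t + s + (k + 1) * (r + s) = t + (s + r) + s + k * (r + s) by ring]
    ring

end coef

section nonzero

variable [NeZero n] {m p q r s : ℕ}

theorem coef_extendWord (z : Vnm n m) (K : Fin m → Fin n) : coef z 0 (extendWord K) = z K :=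
  congrArg z (funext fun i => by simp [extendWord])

theorem coef_ofWordFun {F : (ℕ → Fin n) → ℂ}
    (hF : ∀ J J', (∀ i < s, J i = J' i) → F J = F J') (t : ℕ) (J : ℕ → Fin n) :
    coef (ofWordFun s F) t J = F (shift t J) :=
  hF _ _ fun i hi => by simp [extendWord, shift, hi]

theorem ext_of_coef {u v : Vnm n m} (h : ∀ J, coef u 0 J = coef v 0 J) : u = v := by
  ext K
  simpa only [coef_extendWord] using h (extendWord K)

theorem exists_coef_ne_zero {u : Vnm n m} (hu : u ≠ 0) : ∃ J, coef u 0 J ≠ 0 := by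
  by_contra! h
  exact hu (ext_of_coef h)

theorem exists_coef_mul_coef_ne_zero {P : Vnm n p} {Q : Vnm n q} (hP : P ≠ 0) (hQ : Q ≠ 0) :
    ∃ J, coef P 0 J * coef Q p J ≠ 0 := by
  obtain ⟨K, hK⟩ := exists_coef_ne_zero hP
  obtain ⟨J, hJ⟩ := exists_coef_ne_zero hQ
  refine ⟨splice p K J, ?_⟩
  rw [coef_splice_of_add_le P (zero_add p).le, coef_splice_of_le Q le_rfl, Nat.sub_self]
  exact mul_ne_zero hK hJ

theorem tensV_ne_zero {P : Vnm n p} {Q : Vnm n q} (hP : P ≠ 0) (hQ : Q ≠ 0) : tensV P Q ≠ 0 := by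
  obtain ⟨J, hJ⟩ := exists_coef_mul_coef_ne_zero hP hQ
  exact ne_zero_of_coef_ne_zero (J := J) (t := 0) (by rwa [coef_tensV, zero_add])

theorem ne_zero_of_coef_eq_mul {P : Vnm n m} {R : Vnm n r} {w : Vnm n s} (hP : P ≠ 0)
    (h : ∀ J, coef P 0 J = coef R 0 J * coef w r J) : R ≠ 0 ∧ w ≠ 0 := by
  obtain ⟨J, hJ⟩ := exists_coef_ne_zero hP
  rw [h] at hJ
  exact ⟨ne_zero_of_coef_ne_zero (left_ne_zero_of_mul hJ),
    ne_zero_of_coef_ne_zero (right_ne_zero_of_mul hJ)⟩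

end nonzero

section norm

variable {m g : ℕ}

theorem norm_castV {m' : ℕ} (h : m = m') (z : Vnm n m) : ‖castV h z‖ = ‖z‖ := by
  subst h; rfl

theorem norm_tpowV (x : Vnm n g) (p : ℕ) : ‖tpowV x p‖ = ‖x‖ ^ p := by
  let e : (Fin p → Fin g → Fin n) ≃ (Fin (p * g) → Fin n) :=
    (Equiv.curry _ _ _).symm.trans (finProdFinEquiv.arrowCongr (Equiv.refl _))
  have he : ∀ φ, tpowV x p (e φ) = ∏ i, x (φ i) := fun φ => by
    simp only [tpowV, WithLp.ofLp_toLp]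
    refine Finset.prod_congr rfl fun i _ => congrArg x (funext fun t => ?_)
    have hg : 0 < g := t.pos
    simp [e, Fin.divNat, Fin.modNat, Nat.mul_comm _ g, Nat.mul_add_div hg, Nat.div_eq_of_lt t.isLt,
      Nat.mod_eq_of_lt t.isLt]
  have hsq : ‖tpowV x p‖ ^ 2 = (‖x‖ ^ 2) ^ p := by
    rw [EuclideanSpace.norm_sq_eq, EuclideanSpace.norm_sq_eq, ← e.sum_comp, ← Fin.prod_const,
      Fintype.prod_sum]
    simp only [he, norm_prod, Finset.prod_pow]
  refine (pow_left_inj₀ (norm_nonneg _) (by positivity) two_ne_zero).mp ?_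
  rw [hsq, ← pow_mul, ← pow_mul, mul_comm]

theorem tpowV_ne_zero {x : Vnm n g} (hx : x ≠ 0) (p : ℕ) : tpowV x p ≠ 0 := by
  rw [← norm_ne_zero_iff, norm_tpowV]
  exact pow_ne_zero p (norm_ne_zero_iff.mpr hx)

end norm

section factorization

variable [NeZero n]

theorem exists_tensor_split_of_tensor_eq {dP dQ dR dS : ℕ} {P : Vnm n dP} {Q : Vnm n dQ}
    {R : Vnm n dR} {S : Vnm n dS} (hdR : dR ≤ dP) (hQ : Q ≠ 0) (hR : R ≠ 0)
    (H : ∀ J, coef P 0 J * coef Q dP J = coef R 0 J * coef S dR J) :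
    ∃ w : Vnm n (dP - dR), (∀ J, coef P 0 J = coef R 0 J * coef w dR J) ∧
      ∀ J, coef S 0 J = coef w 0 J * coef Q (dP - dR) J := by
  obtain ⟨J₀, hJ₀⟩ := exists_coef_ne_zero hQ
  obtain ⟨J₁, hJ₁⟩ := exists_coef_ne_zero hR
  -- `w` reads the first `dP - dR` letters as `S` does; the rest of the word fed to `S` is taken
  -- from `J₀`, where `Q` does not vanish, and the factor `Q` is divided out.
  let w := ofWordFun (dP - dR) fun J => coef S 0 (splice (dP - dR) J J₀) / coef Q 0 J₀
  have hw : ∀ t J, coef w t J * coef Q 0 J₀ = coef S 0 (splice (dP - dR) (shift t J) J₀) := by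
    intro t J
    rw [coef_ofWordFun, div_mul_cancel₀ _ hJ₀]
    intro K K' hK
    exact congrArg (· / _) (coef_congr S fun i _ => by simp only [splice]; split_ifs <;> simp_all)
  have hPw : ∀ J, coef P 0 J = coef R 0 J * coef w dR J := by
    intro J
    have h := H (splice dP J J₀)
    rw [coef_splice_of_add_le P (zero_add dP).le, coef_splice_of_le Q le_rfl, Nat.sub_self,
      coef_splice_of_add_le R (by omega), ← coef_zero_shift S, shift_splice hdR] at h
    apply mul_right_cancel₀ hJ₀
    rw [h, mul_assoc, hw]
  refine ⟨w, hPw, fun J => mul_left_cancel₀ hJ₁ ?_⟩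
  have h := H (splice dR J₁ J)
  rw [hPw, coef_splice_of_add_le R (zero_add dR).le, coef_splice_of_le w le_rfl,
    coef_splice_of_le Q hdR, coef_splice_of_le S le_rfl, Nat.sub_self] at h
  rw [← h, mul_assoc]

theorem exists_coef_eq_smul_of_powCoef_eq {N N' k : ℕ} (hN : N' = N) (hk : 1 ≤ k) {u : Vnm n N}
    {v : Vnm n N'} (hu : u ≠ 0) (hv : v ≠ 0) (h : ∀ J, powCoef u k 0 J = powCoef v k 0 J) :
    ∃ c : ℂ, ∀ J, coef u 0 J = c * coef v 0 J := by
  obtain ⟨k, rfl⟩ : ∃ k', k = k' + 1 := ⟨k - 1, by omega⟩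
  obtain ⟨w, huw, -⟩ := exists_tensor_split_of_tensor_eq (P := u) (S := tpowV v k) hN.le
    (tpowV_ne_zero hu k) hv fun J => by simpa only [coef_tpowV, powCoef_succ, zero_add] using h J
  refine ⟨coef w 0 fun _ => 0, fun J => ?_⟩
  rw [huw, coef_eq_coef_of_eq_zero (by omega) w N' 0 J fun _ => 0, mul_comm]

theorem exists_pow_of_coef_mul_comm {p q : ℕ} (hp : 1 ≤ p) (hq : 1 ≤ q) {u : Vnm n p}
    {v : Vnm n q} {ξ : ℂ} (hu : u ≠ 0) (hv : v ≠ 0)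
    (h : ∀ J, coef u 0 J * coef v p J = ξ * (coef v 0 J * coef u q J)) :
    ∃ (g i j : ℕ) (x : Vnm n g) (c₁ c₂ : ℂ), i * g = p ∧ j * g = q ∧
      (∀ J, coef u 0 J = c₁ * powCoef x i 0 J) ∧ ∀ J, coef v 0 J = c₂ * powCoef x j 0 J := by
  induction hs : p + q using Nat.strong_induction_on generalizing p q ξ with
  | _ s ih =>
  have hξ : ξ ≠ 0 := by
    obtain ⟨J, hJ⟩ := exists_coef_mul_coef_ne_zero hu hv
    rw [h] at hJ
    exact left_ne_zero_of_mul hJ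
  wlog hpq : p ≤ q generalizing p q ξ
  · obtain ⟨g, i, j, x, c₁, c₂, hi, hj, hux, hvx⟩ := this hq hp hv hu
      (fun J => by rw [h, inv_mul_cancel_left₀ hξ]) (by omega) (inv_ne_zero hξ) (by omega)
    exact ⟨g, j, i, x, c₂, c₁, hj, hi, hvx, hux⟩
  obtain ⟨w, hvw, hwu⟩ := exists_tensor_split_of_tensor_eq (P := ξ • v) (S := v) hpq hu hu
    fun J => by rw [coef_smul, h]; ring
  rcases hpq.eq_or_lt with rfl | hlt
  · refine ⟨p, 1, 1, u, 1, coef w 0 fun _ => 0, one_mul p, one_mul p,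
      fun J => by rw [powCoef_one, one_mul], fun J => ?_⟩
    rw [hwu, powCoef_one, coef_eq_coef_of_eq_zero (Nat.sub_self p) w 0 0 J fun _ => 0]
    simp only [Nat.sub_self]
  · have hw : w ≠ 0 := (ne_zero_of_coef_eq_mul (smul_ne_zero hξ hv) hvw).2
    obtain ⟨g, i, j, x, c₁, c₂, hi, hj, hux, hwx⟩ := ih q (by omega) hp (by omega : 1 ≤ q - p)
      hu hw (fun J => by rw [← hvw, coef_smul, hwu]) (by omega)
    refine ⟨g, i, j + i, x, c₁, c₂ * c₁, hi, by rw [add_mul, hi, hj]; omega, hux, fun J => ?_⟩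
    rw [hwu, hwx, coef_eq_smul_powCoef_of_forall hux, powCoef_add, zero_add, hj]
    ring

theorem exists_pow_of_powCoef_eq {m l α β : ℕ} (hl : 1 ≤ l) (hlm : l < m) (hα : 1 ≤ α)
    (hαβ : α * m = β * l) {u : Vnm n m} {y : Vnm n l} (hu : u ≠ 0) (hy : y ≠ 0)
    (h : ∀ J, powCoef u α 0 J = powCoef y β 0 J) :
    ∃ (g i j : ℕ) (x : Vnm n g) (c₁ c₂ : ℂ), i * g = m ∧ j * g = l ∧
      (∀ J, coef u 0 J = c₁ * powCoef x i 0 J) ∧ ∀ J, coef y 0 J = c₂ * powCoef x j 0 J := by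
  obtain ⟨α, rfl⟩ : ∃ a, α = a + 1 := ⟨α - 1, by omega⟩
  obtain ⟨β, rfl⟩ : ∃ b, β = b + 1 := ⟨β - 1, by cases β <;> simp_all⟩
  obtain ⟨w, huw, hwy⟩ := exists_tensor_split_of_tensor_eq (P := u) (S := tpowV y β) hlm.le
    (tpowV_ne_zero hu α) hy fun J => by simpa only [coef_tpowV, powCoef_succ, zero_add] using h J
  have hw : w ≠ 0 := (ne_zero_of_coef_eq_mul hu huw).2
  -- `u = y ⊗ w` and `y^{⊗(β+1)} = w ⊗ u^{⊗α} ⊗ y = (w ⊗ y)^{⊗(α+1)}`, so `y ⊗ w` is a multiple of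
  -- `w ⊗ y`.
  have hrot : ∀ J, powCoef u (α + 1) 0 J = powCoef (tensV w y) (α + 1) 0 J := by
    intro J
    rw [h, powCoef_succ', ← coef_tpowV, hwy, coef_tpowV,
      powCoef_tensV_succ_of_split (by omega) (coef_eq_mul_of_forall huw)]
    simp only [zero_add]
    rw [show m - l + α * m = β * l by rw [add_mul, add_mul] at hαβ; omega]
  obtain ⟨c, hc⟩ := exists_coef_eq_smul_of_powCoef_eq (by omega) (by omega) hu (tensV_ne_zero hw hy)
    hrot
  obtain ⟨g, i, j, x, c₁, c₂, hi, hj, hyx, hwx⟩ := exists_pow_of_coef_mul_comm hl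
    (by omega : 1 ≤ m - l) hy hw fun J => by rw [← huw, hc, coef_tensV, zero_add]
  refine ⟨g, i + j, i, x, c₁ * c₂, c₁, by rw [add_mul, hi, hj]; omega, hi, fun J => ?_, hyx⟩
  rw [huw, hyx, coef_eq_smul_powCoef_of_forall hwx, powCoef_add, zero_add, hi]
  ring

theorem exists_rotation_of_powCoef_eq {g k : ℕ} (hk : 1 ≤ k) (x : Vnm n g) (c : ℂ) {p q : ℕ}
    {P : Vnm n p} {Q : Vnm n q} (hpq : p + q = k * g) (hP : P ≠ 0) (hQ : Q ≠ 0)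
    (h : ∀ J, coef P 0 J * coef Q p J = c * powCoef x k 0 J) :
    ∃ (r s : ℕ) (A : Vnm n r) (B : Vnm n s), r + s = g ∧
      (∀ J, coef x 0 J = coef A 0 J * coef B r J) ∧
      ∀ J, coef Q 0 J * coef P q J = c * powCoef (tensV B A) k 0 J := by
  obtain ⟨k, rfl⟩ : ∃ k', k = k' + 1 := ⟨k - 1, by omega⟩
  induction p using Nat.strong_induction_on generalizing q with
  | _ p ih =>
  obtain ⟨J, hJ⟩ := exists_coef_mul_coef_ne_zero hP hQ
  rw [h, powCoef_succ] at hJ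
  have hc : c ≠ 0 := left_ne_zero_of_mul hJ
  have hx : x ≠ 0 := ne_zero_of_coef_ne_zero (left_ne_zero_of_mul (right_ne_zero_of_mul hJ))
  have hsplit : ∀ J, coef x 0 J * coef (c • tpowV x k) g J = coef P 0 J * coef Q p J := fun J => by
    rw [h, coef_smul, coef_tpowV, powCoef_succ, zero_add]; ring
  rcases le_or_gt p g with hpg | hgp
  · obtain ⟨w, hxw, hQw⟩ := exists_tensor_split_of_tensor_eq hpg
      (smul_ne_zero hc (tpowV_ne_zero hx k)) hP hsplit
    refine ⟨p, g - p, P, w, by omega, hxw, fun J => ?_⟩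
    rw [hQw, coef_smul, coef_tpowV,
      powCoef_tensV_succ_of_split (by omega) (coef_eq_mul_of_forall hxw), zero_add,
      show g - p + k * g = q by rw [add_mul] at hpq; omega]
    ring
  · -- `P = x ⊗ P'`, and `P' ⊗ (Q ⊗ x)` splits `x^{⊗(k+1)}` with a shorter first factor.
    obtain ⟨P', hPx, hP'⟩ := exists_tensor_split_of_tensor_eq hgp.le hQ hx fun J => (hsplit J).symm
    have hg : 0 < g := Nat.pos_of_ne_zero fun hg => by simp [hg] at hpq; omega
    obtain ⟨r, s, A, B, hrs, hxAB, hrot⟩ := ih (p - g) (by omega) (q := q + g) (P := P')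
      (Q := tensV Q x) (ne_zero_of_coef_eq_mul hP hPx).2 (tensV_ne_zero hQ hx)
      (by rw [add_mul] at hpq ⊢; omega) fun J => by
        rw [coef_tensV, powCoef_succ', ← mul_assoc, ← hP', coef_smul, coef_tpowV,
          show p - g + q = 0 + k * g by rw [add_mul] at hpq; omega]
        ring
    refine ⟨r, s, A, B, hrs, hxAB, fun J => ?_⟩
    rw [← hrot, coef_tensV, coef_eq_mul_of_forall hPx, zero_add]
    ring

theorem periodicV_of_coef_eq_smul_powCoef {m g p : ℕ} (hp : 2 ≤ p) (hpg : p * g = m)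
    {z : Vnm n m} (hz : ‖z‖ = 1) (x : Vnm n g) (c : ℂ)
    (h : ∀ J, coef z 0 J = c * powCoef x p 0 J) : PeriodicV z := by
  obtain ⟨ρ, hρ⟩ := IsAlgClosed.exists_pow_nat_eq c (by omega : 0 < p)
  have hzx : castV hpg (tpowV (ρ • x) p) = z :=
    ext_of_coef fun J => by rw [coef_castV, coef_tpowV, powCoef_smul, hρ, h]
  have hnorm : ‖ρ • x‖ = 1 := by
    have := congrArg norm hzx
    rw [norm_castV, norm_tpowV, hz] at this
    exact (pow_eq_one_iff_of_nonneg (norm_nonneg _) (by omega)).mp this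
  exact ⟨g, p, ρ • x, hpg, hnorm, hp, hzx⟩

end factorization

end Vnm

open Vnm

/-- if `m > l`, `d = αm = βl`, `1 ≤ a ≤ d−1`, and
`z^{⊗α} = z₁ ⊗ z₂`, `y^{⊗β} = z₂ ⊗ z₁` for unit vectors `z₁ ∈ V_{n,a}`,
`z₂ ∈ V_{n,d−a}`, then `z` is periodic. -/
theorem subCuntz_stmt8 {n m l : ℕ} (hn : 2 ≤ n) (hl : 1 ≤ l) (hlm : l < m)
    (z : Vnm n m) (y : Vnm n l) (hz : ‖z‖ = 1) (hy : ‖y‖ = 1)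
    (α β d a : ℕ) (hα : 1 ≤ α) (hd1 : d = α * m) (hd2 : d = β * l)
    (ha2 : a ≤ d - 1)
    (z₁ : Vnm n a) (z₂ : Vnm n (d - a)) (hz1 : ‖z₁‖ = 1) (hz2 : ‖z₂‖ = 1)
    (h1 : castV (by rw [← hd1]; omega : α * m = a + (d - a)) (tpowV z α) = tensV z₁ z₂)
    (h2 : castV (by rw [← hd2]; omega : β * l = (d - a) + a) (tpowV y β) = tensV z₂ z₁) :
    PeriodicV z := by
  have : NeZero n := ⟨by omega⟩
  have ne_zero_of_norm_eq_one {k : ℕ} {v : Vnm n k} (hv : ‖v‖ = 1) : v ≠ 0 :=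
    ne_zero_of_norm_ne_zero (by rw [hv]; exact one_ne_zero)
  have hz₁₂ : ∀ J, coef z₁ 0 J * coef z₂ a J = 1 * powCoef z α 0 J := fun J => by
    simpa [coef_castV, coef_tpowV, coef_tensV] using (congrArg (coef · 0 J) h1).symm
  have hz₂₁ : ∀ J, coef z₂ 0 J * coef z₁ (d - a) J = powCoef y β 0 J := fun J => by
    simpa [coef_castV, coef_tpowV, coef_tensV] using (congrArg (coef · 0 J) h2).symm
  obtain ⟨r, s, A, B, hrs, hzAB, hBA⟩ := exists_rotation_of_powCoef_eq hα z 1 (by omega)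
    (ne_zero_of_norm_eq_one hz1) (ne_zero_of_norm_eq_one hz2) hz₁₂
  obtain ⟨hA, hB⟩ := ne_zero_of_coef_eq_mul (ne_zero_of_norm_eq_one hz) hzAB
  obtain ⟨g, i, j, x, c, -, hig, hjg, hBAx, -⟩ := exists_pow_of_powCoef_eq hl (by omega : l < s + r)
    hα (by rw [add_comm, hrs, ← hd1, hd2]) (tensV_ne_zero hB hA) (ne_zero_of_norm_eq_one hy)
    fun J => by rw [← one_mul (powCoef _ α 0 J), ← hBA, hz₂₁]
  have hi : 2 ≤ i := by
    have hgl : g ≤ l := hjg ▸ Nat.le_mul_of_pos_left g (Nat.pos_of_ne_zero (by rintro rfl; omega))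
    by_contra! hi
    interval_cases i <;> omega
  obtain ⟨r', s', A', B', hrs', -, hAB⟩ := exists_rotation_of_powCoef_eq (k := i) (by omega) x c
    (P := B) (Q := A) (by omega) hB hA fun J => by simpa only [coef_tensV, zero_add] using hBAx J
  exact periodicV_of_coef_eq_smul_powCoef hi (by rw [add_comm, hrs', hig]; omega) hz
    (tensV B' A') c fun J => by rw [hzAB, hAB]
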